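/- The vector ρ₄ := e_L + e_{25} + e_{34} lies in Γ^∨, spans an extremal ray of Γ^∨, and satisfies ⟨K, ρ₄⟩ = −2; hence ρ₄ is a coextremal ray of M̄_{0,6}. (Geometrically, ρ₄ is the class of a generic fiber of the conic bundle (φ_{ij}, φ_{kl}) : M̄_{0,6} → ℙ¹ × ℙ¹ formed from two forgetful maps for disjoint pairs {i,j} and {k,l} of marked points.) -/

import Mathlib

noncomputable section

/-- Index in `Fin 16` of the exceptional class `E_{ab}` attached to a pair of points
(points written `0`-based as elements of `Fin 5`, assuming `a < b`):
`(0,1) ↦ 6, (0,2) ↦ 7, …, (3,4) ↦ 15`. -/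
def pairIdx : ℕ → ℕ → Fin 16
  | 0, 1 => 6
  | 0, 2 => 7
  | 0, 3 => 8
  | 0, 4 => 9
  | 1, 2 => 10
  | 1, 3 => 11
  | 1, 4 => 12
  | 2, 3 => 13
  | 2, 4 => 14
  | 3, 4 => 15
  | _, _ => 0

/-- The coordinate vector `e_L` (the class `L`). -/
def eL : Fin 16 → ℝ := Pi.single 0 1

/-- The coordinate vector `e_i` for the point `i ∈ {1,…,5}` (represented `0`-based
by `i : Fin 5`). -/
def eP (i : Fin 5) : Fin 16 → ℝ := Pi.single ⟨i.val + 1, by omega⟩ 1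

/-- The coordinate vector `e_{ab}` for a 2-element subset `{a,b} ⊂ {1,…,5}`
(represented `0`-based); symmetric in `a` and `b`. -/
def eE (a b : Fin 5) : Fin 16 → ℝ :=
  Pi.single (if a.val < b.val then pairIdx a.val b.val else pairIdx b.val a.val) 1

/-- The standard inner product on `ℝ¹⁶`. -/
def ip (x y : Fin 16 → ℝ) : ℝ := ∑ i, x i * y i

def Distinct3 (k l m : Fin 5) : Prop := k ≠ l ∧ k ≠ m ∧ l ≠ m

def Distinct5 (i j k l m : Fin 5) : Prop :=
  i ≠ j ∧ i ≠ k ∧ i ≠ l ∧ i ≠ m ∧ j ≠ k ∧ j ≠ l ∧ j ≠ m ∧ k ≠ l ∧ k ≠ m ∧ l ≠ m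

/-- The 40 classes: 25 boundary divisors and 15 fixed-point divisors `F_σ` of `M̄₀₆`. -/
def Gamma : Set (Fin 16 → ℝ) :=
  {v | (∃ i : Fin 5, v = eP i) ∨
       (∃ a b : Fin 5, a ≠ b ∧ v = eE a b) ∨
       (∃ k l m : Fin 5, Distinct3 k l m ∧
          v = eL - eP k - eP l - eP m - eE k l - eE k m - eE l m) ∨
       (∃ j a b c d : Fin 5, Distinct5 j a b c d ∧
          v = (2 : ℝ) • eL - (∑ i, eP i) - eE a c - eE a d - eE b c - eE b d)}

/-- The dual cone `Γ^∨ = {v : ⟨g,v⟩ ≥ 0 for all g ∈ Γ}`. -/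
def GammaDual : Set (Fin 16 → ℝ) := {v | ∀ gv ∈ Gamma, 0 ≤ ip gv v}
/-- The canonical class `K = -4e_L + 2(e_1 + ⋯ + e_5) + Σ_{{a,b}} e_{ab}` of `M̄₀₆`. -/
def Kcl : Fin 16 → ℝ :=
  -((4 : ℝ) • eL) + (2 : ℝ) • (∑ i, eP i) +
    ∑ a : Fin 5, ∑ b : Fin 5, if a < b then eE a b else 0

/-- A nonzero `ρ` spans an extremal ray of the convex cone `C` if `ρ ∈ C` and
whenever `v₁, v₂ ∈ C` with `v₁ + v₂ ∈ ℝ₊·ρ`, both `v₁` and `v₂` lie in `ℝ₊·ρ`. -/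
def SpansExtremalRay (C : Set (Fin 16 → ℝ)) (ρ : Fin 16 → ℝ) : Prop :=
  ρ ≠ 0 ∧ ρ ∈ C ∧ ∀ v₁ v₂, v₁ ∈ C → v₂ ∈ C →
    (∃ t : ℝ, 0 ≤ t ∧ v₁ + v₂ = t • ρ) →
    ((∃ t : ℝ, 0 ≤ t ∧ v₁ = t • ρ) ∧ (∃ t : ℝ, 0 ≤ t ∧ v₂ = t • ρ))
/-- `ρ₄ = e_L + e₂₅ + e₃₄` (pairs written `1`-based; here `0`-based in `Fin 5`). -/
def ρ₄ : Fin 16 → ℝ := eL + eE 1 4 + eE 2 3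

/-! Pairing with `ρ₄ = e_L + e₂₅ + e₃₄` reads off the coordinates `L`, `E₂₅`, `E₃₄` (indices
`0, 12, 13`). Because `{2,5}, {3,4}` is a matching, every class of `Γ` pairs nonnegatively with
`ρ₄`. The classes orthogonal to `ρ₄` (all `E_i`, the other eight `E_ab`, and the planes through
`p₁p₂p₅` and `p₁p₃p₄`) force a vector of `Γ^∨` vanishing on them to be a multiple of `ρ₄`; and if
`v₁ + v₂ ∈ ℝ₊ρ₄` with `v₁, v₂ ∈ Γ^∨`, both summands vanish on these classes. Finally
`⟨K, ρ₄⟩ = -4 + 1 + 1`. -/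

open Matrix

lemma ip_eq_dotProduct : ip = dotProduct := rfl

lemma ip_add_right (x y z : Fin 16 → ℝ) : ip x (y + z) = ip x y + ip x z := dotProduct_add x y z

lemma ip_smul_right (x : Fin 16 → ℝ) (t : ℝ) (y : Fin 16 → ℝ) : ip x (t • y) = t * ip x y :=
  dotProduct_smul t x y

lemma ip_sub_left (x y v : Fin 16 → ℝ) : ip (x - y) v = ip x v - ip y v := sub_dotProduct x y v

lemma ip_smul_left (t : ℝ) (x v : Fin 16 → ℝ) : ip (t • x) v = t * ip x v := smul_dotProduct t x v

lemma ip_sum_left {ι : Type*} (s : Finset ι) (x : ι → Fin 16 → ℝ) (v : Fin 16 → ℝ) :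
    ip (∑ i ∈ s, x i) v = ∑ i ∈ s, ip (x i) v :=
  sum_dotProduct s x v

lemma spansExtremalRay_dual_of_face {S : Set (Fin 16 → ℝ)} {ρ : Fin 16 → ℝ} (hρ : ρ ≠ 0)
    (hρS : ∀ g ∈ S, 0 ≤ ip g ρ)
    (hface : ∀ v, (∀ g ∈ S, 0 ≤ ip g v) → (∀ g ∈ S, ip g ρ = 0 → ip g v = 0) →
      ∃ t : ℝ, 0 ≤ t ∧ v = t • ρ) :
    SpansExtremalRay {v | ∀ g ∈ S, 0 ≤ ip g v} ρ := by
  refine ⟨hρ, hρS, fun v₁ v₂ h₁ h₂ ⟨t, _, hsum⟩ => ⟨hface v₁ h₁ ?_, hface v₂ h₂ ?_⟩⟩ <;>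
  · intro g hg hgρ
    have hzero : ip g v₁ + ip g v₂ = 0 := by
      rw [← ip_add_right, hsum, ip_smul_right, hgρ, mul_zero]
    linarith [h₁ g hg, h₂ g hg]

lemma rho4_eq : ρ₄ = Pi.single 0 1 + Pi.single 12 1 + Pi.single 13 1 := rfl

lemma rho4_ne_zero : ρ₄ ≠ 0 := fun h => by
  simpa [rho4_eq, Pi.single_apply] using congrFun h 0

lemma ip_single_one (j : Fin 16) (v : Fin 16 → ℝ) : ip (Pi.single j 1) v = v j :=
  single_one_dotProduct j v

lemma ip_rho4 (g : Fin 16 → ℝ) : ip g ρ₄ = g 0 + g 12 + g 13 := by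
  simp only [ip_eq_dotProduct, rho4_eq, dotProduct_add, dotProduct_single, mul_one]

lemma ip_eL_rho4 : ip eL ρ₄ = 1 := by
  simp [ip_rho4, eL]

lemma ip_eP_rho4 (i : Fin 5) : ip (eP i) ρ₄ = 0 := by
  rw [ip_rho4]; fin_cases i <;> simp [eP]

lemma ip_eE_rho4_nonneg (a b : Fin 5) : 0 ≤ ip (eE a b) ρ₄ := by
  simp only [ip_rho4, eE, Pi.single_apply]
  split_ifs <;> norm_num

lemma ip_eE_rho4_add_le_one {x c d : Fin 5} (hxc : x ≠ c) (hxd : x ≠ d) (hcd : c ≠ d) :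
    ip (eE x c) ρ₄ + ip (eE x d) ρ₄ ≤ 1 := by
  simp only [ip_rho4]
  fin_cases x <;> fin_cases c <;> fin_cases d <;>
    simp_all [eE, pairIdx]

lemma ip_eE_rho4_triangle_le_one {k l m : Fin 5} (hkl : k ≠ l) (hkm : k ≠ m) (hlm : l ≠ m) :
    ip (eE k l) ρ₄ + ip (eE k m) ρ₄ + ip (eE l m) ρ₄ ≤ 1 := by
  simp only [ip_rho4]
  fin_cases k <;> fin_cases l <;> fin_cases m <;>
    simp_all [eE, pairIdx]

lemma ip_Kcl_rho4 : ip Kcl ρ₄ = -2 := by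
  rw [ip_rho4]
  simp [Kcl, eL, eP, eE, pairIdx, Fin.sum_univ_succ]
  norm_num

lemma single_mem_Gamma {j : Fin 16} (hj : j ≠ 0) : (Pi.single j 1 : Fin 16 → ℝ) ∈ Gamma := by
  have hindex : ∀ j : Fin 16, j ≠ 0 →
      (∃ i : Fin 5, j = ⟨i.val + 1, by omega⟩) ∨
      ∃ a b : Fin 5, a ≠ b ∧
        j = if a.val < b.val then pairIdx a.val b.val else pairIdx b.val a.val := by
    decide
  rcases hindex j hj with ⟨i, rfl⟩ | ⟨a, b, hab, rfl⟩
  · exact Or.inl ⟨i, rfl⟩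
  · exact Or.inr (Or.inl ⟨a, b, hab, rfl⟩)

lemma rho4_mem_GammaDual : ρ₄ ∈ GammaDual := by
  rintro g (⟨i, rfl⟩ | ⟨a, b, -, rfl⟩ | ⟨k, l, m, ⟨hkl, hkm, hlm⟩, rfl⟩ |
    ⟨j, a, b, c, d, ⟨-, -, -, -, -, hac, had, hbc, hbd, hcd⟩, rfl⟩)
  · exact (ip_eP_rho4 i).ge
  · exact ip_eE_rho4_nonneg a b
  · have := ip_eE_rho4_triangle_le_one hkl hkm hlm
    simp only [ip_sub_left, ip_eL_rho4, ip_eP_rho4]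
    linarith
  · have ha := ip_eE_rho4_add_le_one hac had hcd
    have hb := ip_eE_rho4_add_le_one hbc hbd hcd
    simp only [ip_sub_left, ip_smul_left, ip_sum_left, ip_eL_rho4, ip_eP_rho4,
      Finset.sum_const_zero]
    linarith

lemma eq_smul_rho4_of_face {v : Fin 16 → ℝ} (hv : v ∈ GammaDual)
    (hface : ∀ g ∈ Gamma, ip g ρ₄ = 0 → ip g v = 0) : ∃ t : ℝ, 0 ≤ t ∧ v = t • ρ₄ := by
  have hcoord : ∀ j : Fin 16, j ≠ 0 → j ≠ 12 → j ≠ 13 → v j = 0 := fun j h0 h12 h13 => by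
    rw [← ip_single_one j v]
    refine hface _ (single_mem_Gamma h0) ?_
    simp [ip_rho4, h0.symm, h12.symm, h13.symm]
  have h12 : v 12 = v 0 := by
    have := hface _ (Or.inr (Or.inr (Or.inl ⟨0, 1, 4, ⟨by decide, by decide, by decide⟩, rfl⟩)))
      (by simp [ip_rho4, eL, eP, eE, pairIdx])
    simp [ip_sub_left, eL, eP, eE, pairIdx, ip_single_one, hcoord] at this
    linarith
  have h13 : v 13 = v 0 := by
    have := hface _ (Or.inr (Or.inr (Or.inl ⟨0, 2, 3, ⟨by decide, by decide, by decide⟩, rfl⟩)))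
      (by simp [ip_rho4, eL, eP, eE, pairIdx])
    simp [ip_sub_left, eL, eP, eE, pairIdx, ip_single_one, hcoord] at this
    linarith
  refine ⟨v 0, ?_, funext fun j => ?_⟩
  · simpa [h12, ip_single_one] using hv _ (single_mem_Gamma (j := 12) (by decide))
  · fin_cases j <;> simp [rho4_eq, hcoord, h12, h13]

theorem rho4_coextremal :
    ρ₄ ∈ GammaDual ∧ SpansExtremalRay GammaDual ρ₄ ∧ ip Kcl ρ₄ = -2 :=
  ⟨rho4_mem_GammaDual,
    spansExtremalRay_dual_of_face rho4_ne_zero rho4_mem_GammaDual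
      fun _ hv hface => eq_smul_rho4_of_face hv hface,
    ip_Kcl_rho4⟩
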